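/- arXiv:0902.1843 — 2 statements merged into one kernel-verified Lean document; each statement's English description precedes it below -/
import Mathlib

section
/- Suppose symmetric n×n matrices X^(1),...,X^(d) (d = ⌊n/2⌋) satisfy: X^(k) ≥ 0 entrywise, Σ_{k=1}^d X^(k) = J - I, and I + Σ_{k=1}^d cos(2πik/n) X^(k) ⪰ 0 for i = 1,...,d. Then 2I - X^(1) + (2 - 2cos(2π/n))(J - I) ⪰ 0. -/
/-!
The LMIs `Mᵢ := I + ∑ₖ cos(2πik/n) X⁽ᵏ⁾ ⪰ 0` hold for every `0 ≤ i < n`: for `i = 0` the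
matrix is `I + ∑ₖ X⁽ᵏ⁾ = J`, and `M_{n-i} = Mᵢ`. The target matrix is `∑ᵢ wᵢ Mᵢ` for the
nonnegative weights `wᵢ = (2 - 2cos(2π/n)) [i = 0] + (2cos(2π/n) - 2cos(2πi/n)) / n`: by the
orthogonality relations `∑_{i<n} cos(2πmi/n) = n [n ∣ m]` and
`2 cos(2πi/n) cos(2πik/n) = cos(2πi(k+1)/n) + cos(2πi(k-1)/n)`, the coefficient of `I` is `2`
and that of `X⁽ᵏ⁾` (`1 ≤ k ≤ n/2`) is `2 - 2cos(2π/n) - [k = 1]`.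
-/

open Finset Matrix Real

lemma sum_range_cos_two_pi_mul_div (n : ℕ) (m : ℤ) :
    ∑ i ∈ range n, cos (2 * π * m * i / n) = if (n : ℤ) ∣ m then (n : ℝ) else 0 := by
  rcases Nat.eq_zero_or_pos n with rfl | hn
  · simp
  have hn0 : (n : ℝ) ≠ 0 := by positivity
  split_ifs with hdvd
  · obtain ⟨q, rfl⟩ := hdvd
    have hterm (i : ℕ) : cos (2 * π * ((n * q : ℤ) : ℝ) * i / n) = 1 := by
      rw [← cos_int_mul_two_pi (q * i)]
      congr 1
      push_cast
      field_simp
    simp only [hterm, sum_const, card_range, nsmul_eq_mul, mul_one]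
  · set ζ : ℂ := Complex.exp ((2 * π * m / n : ℝ) * Complex.I)
    have hpow (i : ℕ) : ζ ^ i = Complex.exp ((2 * π * m * i / n : ℝ) * Complex.I) := by
      rw [← Complex.exp_nat_mul]
      push_cast
      ring_nf
    have hζn : ζ ^ n = 1 := by
      rw [hpow, Complex.exp_eq_one_iff, mul_div_cancel_right₀ _ hn0]
      exact ⟨m, by push_cast; ring⟩
    have hζ1 : ζ ≠ 1 := by
      rw [Ne, Complex.exp_eq_one_iff]
      rintro ⟨q, hq⟩
      have hnC : (n : ℂ) ≠ 0 := by exact_mod_cast hn0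
      have hπ : (π : ℂ) ≠ 0 := by exact_mod_cast pi_ne_zero
      push_cast at hq
      field_simp at hq
      exact hdvd ⟨q, by exact_mod_cast (by linear_combination hq : (m : ℂ) = n * q)⟩
    have hgeom := geom_sum_eq hζ1 n
    rw [hζn, sub_self, zero_div] at hgeom
    rw [← Complex.zero_re, ← hgeom, Complex.re_sum]
    exact sum_congr rfl fun i _ => by rw [hpow, Complex.exp_ofReal_mul_I_re]

lemma sum_range_cos_two_pi_mul_div_eq_zero {n : ℕ} {m : ℤ} (hm : m ≠ 0) (hmn : |m| < n) :
    ∑ i ∈ range n, cos (2 * π * m * i / n) = 0 := by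
  rw [sum_range_cos_two_pi_mul_div, if_neg fun hdvd => hm (Int.eq_zero_of_abs_lt_dvd hdvd hmn)]

lemma cos_le_cos_of_le_of_le_two_pi_sub {δ θ : ℝ} (hδ : 0 ≤ δ) (hδθ : δ ≤ θ)
    (hθ : θ ≤ 2 * π - δ) : cos θ ≤ cos δ := by
  rcases le_total θ π with h | h
  · exact cos_le_cos_of_nonneg_of_le_pi hδ h hδθ
  · rw [← cos_two_pi_sub θ]
    exact cos_le_cos_of_nonneg_of_le_pi hδ (by linarith) (by linarith)

lemma cos_two_pi_mul_sub_div (n i k : ℕ) (hi : i ≤ n) :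
    cos (2 * π * ((n - i : ℕ) : ℝ) * k / n) = cos (2 * π * i * k / n) := by
  rcases Nat.eq_zero_or_pos n with rfl | hn
  · obtain rfl : i = 0 := by omega
    rfl
  rw [← cos_int_mul_two_pi_sub _ k]
  congr 1
  push_cast [Nat.cast_sub hi]
  field_simp
  ring

noncomputable def lmiWeight (n i : ℕ) : ℝ :=
  (2 - 2 * cos (2 * π / n)) * (if i = 0 then 1 else 0) +
    (2 * cos (2 * π / n) - 2 * cos (2 * π * i / n)) / n

lemma lmiWeight_nonneg {n i : ℕ} (hi : i < n) : 0 ≤ lmiWeight n i := by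
  have hn : (0 : ℝ) < n := by exact_mod_cast (by omega : 0 < n)
  rcases Nat.eq_zero_or_pos i with rfl | hi0
  · have : lmiWeight n 0 = (2 - 2 * cos (2 * π / n)) * (1 - 1 / n) := by
      simp only [lmiWeight, ↓reduceIte, Nat.cast_zero, mul_zero, zero_div, cos_zero]
      ring
    rw [this]
    have : 1 / (n : ℝ) ≤ 1 := by
      rw [div_le_one hn]; exact_mod_cast (by omega : 1 ≤ n)
    nlinarith [cos_le_one (2 * π / n)]
  · have hle : cos (2 * π * i / n) ≤ cos (2 * π / n) := by
      have hi1 : (1 : ℝ) ≤ i := by exact_mod_cast hi0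
      have hin : (i : ℝ) + 1 ≤ n := by exact_mod_cast hi
      apply cos_le_cos_of_le_of_le_two_pi_sub (by positivity)
      · exact div_le_div_of_nonneg_right (by nlinarith [pi_pos]) hn.le
      · rw [div_le_iff₀ hn]
        field_simp
        nlinarith [pi_pos]
    simp only [lmiWeight, if_neg hi0.ne', mul_zero, zero_add]
    exact div_nonneg (by linarith) hn.le

lemma sum_lmiWeight_mul_cos {n : ℕ} (hn : 0 < n) (k : ℤ) :
    ∑ i ∈ range n, lmiWeight n i * cos (2 * π * i * k / n) =
      (2 - 2 * cos (2 * π / n)) +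
        (2 * cos (2 * π / n) * ∑ i ∈ range n, cos (2 * π * k * i / n)
          - ∑ i ∈ range n, cos (2 * π * (k + 1 : ℤ) * i / n)
          - ∑ i ∈ range n, cos (2 * π * (k - 1 : ℤ) * i / n)) / n := by
  have hprod (i : ℕ) : 2 * cos (2 * π * i / n) * cos (2 * π * i * k / n) =
      cos (2 * π * (k + 1 : ℤ) * i / n) + cos (2 * π * (k - 1 : ℤ) * i / n) := by
    rw [two_mul_cos_mul_cos, add_comm, ← cos_neg (_ - _)]
    push_cast
    ring_nf
  have hterm (i : ℕ) : (2 * cos (2 * π / n) - 2 * cos (2 * π * i / n)) / n *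
      cos (2 * π * i * k / n) = (2 * cos (2 * π / n) * cos (2 * π * k * i / n) -
        cos (2 * π * (k + 1 : ℤ) * i / n) - cos (2 * π * (k - 1 : ℤ) * i / n)) / n := by
    rw [sub_sub, ← hprod, mul_right_comm (2 * π) (k : ℝ)]
    ring
  simp only [lmiWeight, add_mul, sum_add_distrib, hterm, ← sum_div, sum_sub_distrib, ← mul_sum]
  congr 1
  simp [ite_mul, hn]

lemma sum_lmiWeight {n : ℕ} (hn : 3 ≤ n) : ∑ i ∈ range n, lmiWeight n i = 2 := by
  have h := sum_lmiWeight_mul_cos (by omega : 0 < n) 0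
  rw [sum_range_cos_two_pi_mul_div_eq_zero (m := 0 + 1) (by norm_num) (by norm_num; omega),
    sum_range_cos_two_pi_mul_div_eq_zero (m := 0 - 1) (by norm_num) (by norm_num; omega),
    sum_range_cos_two_pi_mul_div, if_pos (dvd_zero _)] at h
  simpa [show (n : ℝ) ≠ 0 by positivity] using h

lemma sum_lmiWeight_mul_cos_of_le {n k : ℕ} (hn : 3 ≤ n) (hk : 1 ≤ k) (hkn : k ≤ n / 2) :
    ∑ i ∈ range n, lmiWeight n i * cos (2 * π * i * k / n) =
      2 - 2 * cos (2 * π / n) - if k = 1 then 1 else 0 := by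
  have h := sum_lmiWeight_mul_cos (by omega : 0 < n) k
  rw [sum_range_cos_two_pi_mul_div_eq_zero (m := k) (by omega) (by rw [abs_lt]; omega),
    sum_range_cos_two_pi_mul_div_eq_zero (m := k + 1) (by omega) (by rw [abs_lt]; omega)] at h
  have hn0 : (n : ℝ) ≠ 0 := by positivity
  by_cases hk1 : k = 1
  · subst hk1
    rw [sum_range_cos_two_pi_mul_div, if_pos (by norm_num)] at h
    simp only [Int.cast_natCast] at h
    rw [h, if_pos rfl]
    field_simp
    ring
  · rw [sum_range_cos_two_pi_mul_div_eq_zero (m := k - 1) (by omega)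
      (by rw [abs_lt]; omega)] at h
    simp only [Int.cast_natCast] at h
    rw [h, if_neg hk1]
    ring

lemma sum_smul_add_sum_smul {ι κ R M : Type*} [CommSemiring R] [AddCommMonoid M] [Module R M]
    (s : Finset ι) (t : Finset κ) (v : ι → R) (c : ι → κ → R) (A : M) (X : κ → M) :
    ∑ i ∈ s, v i • (A + ∑ k ∈ t, c i k • X k) =
      (∑ i ∈ s, v i) • A + ∑ k ∈ t, (∑ i ∈ s, v i * c i k) • X k := by
  simp only [smul_add, smul_sum, smul_smul, sum_add_distrib, sum_smul]
  rw [sum_comm]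

lemma posSemidef_allOnes {n : Type*} [Fintype n] :
    (of fun _ _ => (1 : ℝ) : Matrix n n ℝ).PosSemidef := by
  convert posSemidef_vecMulVec_self_star (fun _ : n => (1 : ℝ))
  ext i j
  simp [vecMulVec]

lemma posSemidef_one_add_sum_cos_smul {n d : ℕ} (hd : d = n / 2)
    {X : ℕ → Matrix (Fin n) (Fin n) ℝ}
    (hsum : ∑ k ∈ Icc 1 d, X k = of (fun _ _ => (1 : ℝ)) - 1)
    (hlmi : ∀ i ∈ Icc 1 d, (1 + ∑ k ∈ Icc 1 d, cos (2 * π * i * k / n) • X k).PosSemidef)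
    {i : ℕ} (hi : i < n) :
    (1 + ∑ k ∈ Icc 1 d, cos (2 * π * i * k / n) • X k).PosSemidef := by
  rcases Nat.eq_zero_or_pos i with rfl | hi0
  · simpa [hsum] using posSemidef_allOnes
  by_cases hid : i ≤ d
  · exact hlmi i (mem_Icc.mpr ⟨hi0, hid⟩)
  · simpa only [cos_two_pi_mul_sub_div n i _ hi.le] using
      hlmi (n - i) (mem_Icc.mpr ⟨by omega, by omega⟩)

theorem stmt12_general (n : ℕ) (hn : 3 ≤ n) (d : ℕ) (hd : d = n / 2)
    (X : ℕ → Matrix (Fin n) (Fin n) ℝ)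
    (hsum : ∑ k ∈ Finset.Icc 1 d, X k =
      Matrix.of (fun _ _ => (1 : ℝ)) - (1 : Matrix (Fin n) (Fin n) ℝ))
    (hlmi : ∀ i ∈ Finset.Icc 1 d,
      Matrix.PosSemidef
        ((1 : Matrix (Fin n) (Fin n) ℝ) +
          ∑ k ∈ Finset.Icc 1 d, Real.cos (2 * Real.pi * i * k / n) • X k)) :
    Matrix.PosSemidef
      ((2 : ℝ) • (1 : Matrix (Fin n) (Fin n) ℝ) - X 1 +
        (2 - 2 * Real.cos (2 * Real.pi / n)) •
          (Matrix.of (fun _ _ => (1 : ℝ)) - (1 : Matrix (Fin n) (Fin n) ℝ))) := by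
  have hcomb : (2 : ℝ) • 1 - X 1 + (2 - 2 * cos (2 * π / n)) • (of (fun _ _ => 1) - 1) =
      ∑ i ∈ range n,
        lmiWeight n i • (1 + ∑ k ∈ Icc 1 d, cos (2 * π * i * k / n) • X k) := by
    have hcoeff : ∀ k ∈ Icc 1 d, (∑ i ∈ range n, lmiWeight n i * cos (2 * π * i * k / n)) =
        2 - 2 * cos (2 * π / n) - if k = 1 then 1 else 0 := fun k hk =>
      sum_lmiWeight_mul_cos_of_le hn (mem_Icc.mp hk).1 (hd ▸ (mem_Icc.mp hk).2)
    rw [sum_smul_add_sum_smul, sum_lmiWeight hn, sum_congr rfl fun k hk => by rw [hcoeff k hk],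
      ← hsum]
    simp only [sub_smul, ite_smul, one_smul, zero_smul, sum_sub_distrib, smul_sum,
      sum_ite_eq', if_pos (mem_Icc.mpr ⟨le_rfl, by omega⟩ : 1 ∈ Icc 1 d)]
    abel
  rw [hcomb]
  exact posSemidef_sum _ fun i hi =>
    (posSemidef_one_add_sum_cos_smul hd hsum hlmi (mem_range.mp hi)).smul
      (lmiWeight_nonneg (mem_range.mp hi))

theorem stmt12 (n : ℕ) (hn : 3 ≤ n) (d : ℕ) (hd : d = n / 2)
    (X : ℕ → Matrix (Fin n) (Fin n) ℝ)
    (hsym : ∀ k ∈ Finset.Icc 1 d, (X k).IsSymm)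
    (hnonneg : ∀ k ∈ Finset.Icc 1 d, ∀ i j, 0 ≤ X k i j)
    (hsum : ∑ k ∈ Finset.Icc 1 d, X k =
      Matrix.of (fun _ _ => (1 : ℝ)) - (1 : Matrix (Fin n) (Fin n) ℝ))
    (hlmi : ∀ i ∈ Finset.Icc 1 d,
      Matrix.PosSemidef
        ((1 : Matrix (Fin n) (Fin n) ℝ) +
          ∑ k ∈ Finset.Icc 1 d, Real.cos (2 * Real.pi * i * k / n) • X k)) :
    Matrix.PosSemidef
      ((2 : ℝ) • (1 : Matrix (Fin n) (Fin n) ℝ) - X 1 +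
        (2 - 2 * Real.cos (2 * Real.pi / n)) •
          (Matrix.of (fun _ _ => (1 : ℝ)) - (1 : Matrix (Fin n) (Fin n) ℝ))) :=
  stmt12_general n hn d hd X hsum hlmi
end

section
/- The adjacency matrix X of any Hamiltonian circuit on n ≥ 3 vertices satisfies the Cvetković et al. SDP constraints: Xe = 2e, diag(X) = 0, 0 ≤ X ≤ J entrywise, and 2I - X + (2 - 2cos(2π/n))(J - I) ⪰ 0. -/
/-!
Conjugating by the permutation matrix only relabels the vertices, so everything reduces to the
standard cycle `C₁`. The quadratic form of `2I - C₁` is `∑ (xᵢ - xᵢ₊₁)²`, and expanding `x` in the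
characters of the cyclic group diagonalises it with eigenvalues `2 - 2 cos (2πk/n)`. The smallest
nonzero one is `λ = 2 - 2 cos (2π/n)`, whence the discrete Poincaré inequality
`n ∑ (xᵢ - xᵢ₊₁)² ≥ λ (n ∑ xᵢ² - (∑ xᵢ)²)`, which dominates the correction `λ xᵀ(J - I)x`.
-/

open Matrix

/-- The adjacency matrix `C₁` of the standard cycle on `n` vertices. -/
def cycleAdj (n : ℕ) : Matrix (Fin n) (Fin n) ℝ :=
  Matrix.of fun i j =>
    if (j.val + n - i.val) % n = 1 ∨ (i.val + n - j.val) % n = 1 then 1 else 0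

open Finset Real ComplexConjugate

lemma cos_two_pi_mul_div_le {n k : ℕ} (hk : 0 < k) (hkn : k < n) :
    cos (2 * π * k / n) ≤ cos (2 * π / n) := by
  have hn : (0 : ℝ) < n := by exact_mod_cast hk.trans hkn
  have hmono : ∀ m : ℝ, 1 ≤ m → 2 * m ≤ n → cos (2 * π * m / n) ≤ cos (2 * π / n) := by
    intro m hm hmn
    apply cos_le_cos_of_nonneg_of_le_pi (by positivity)
    · rw [div_le_iff₀ hn]; nlinarith [pi_pos]
    · rw [div_le_div_iff_of_pos_right hn]; nlinarith [pi_pos]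
  rcases le_or_gt (2 * (k : ℝ)) n with h | h
  · exact hmono k (by exact_mod_cast hk) h
  · have hsymm : cos (2 * π * k / n) = cos (2 * π * (n - k) / n) := by
      rw [← cos_two_pi_sub]; congr 1; field_simp
    rw [hsymm]
    exact hmono _ (by linarith [show (k : ℝ) + 1 ≤ n by exact_mod_cast hkn]) (by linarith)

namespace AddChar

section FiniteAbelian

variable {G : Type*} [AddCommGroup G] [Fintype G]

lemma sum_norm_sq_sum_mul_apply (x : G → ℂ) :
    ∑ ψ : AddChar G ℂ, ‖∑ j, x j * ψ j‖ ^ 2 = Fintype.card G * ∑ j, ‖x j‖ ^ 2 := by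
  classical
  apply Complex.ofReal_injective
  calc _ = ∑ i, ∑ j, x i * conj (x j) * ∑ ψ : AddChar G ℂ, ψ (i - j) := by
        push_cast
        simp_rw [← Complex.mul_conj', map_sum, map_mul, ← map_neg_eq_conj, sum_mul_sum, mul_sum,
          sub_eq_add_neg, map_add_eq_mul]
        rw [sum_comm]
        refine sum_congr rfl fun i _ => ?_
        rw [sum_comm]
        exact sum_congr rfl fun j _ => sum_congr rfl fun ψ _ => by ring
    _ = _ := by
        simp_rw [sum_apply_eq_ite, sub_eq_zero, mul_ite, mul_zero, sum_ite_eq, mem_univ, if_true,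
          mul_sum]
        push_cast
        exact sum_congr rfl fun j _ => by rw [← Complex.mul_conj']; ring

lemma sum_sub_comp_add_mul_apply (x : G → ℂ) (g : G) (ψ : AddChar G ℂ) :
    ∑ j, (x j - x (j + g)) * ψ j = (1 - ψ (-g)) * ∑ j, x j * ψ j := by
  have hshift : ∑ j, x (j + g) * ψ j = ψ (-g) * ∑ j, x j * ψ j := by
    rw [mul_sum]
    exact Fintype.sum_equiv (Equiv.addRight g) _ _ fun j => by
      simp [mul_left_comm (ψ (-g)), ← map_add_eq_mul]
  rw [sub_mul, one_mul, ← hshift, ← sum_sub_distrib]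
  simp_rw [sub_mul]

lemma norm_one_sub_apply_neg_sq (ψ : AddChar G ℂ) (g : G) :
    ‖1 - ψ (-g)‖ ^ 2 = 2 - 2 * (ψ g).re := by
  have h := ψ.norm_apply g
  rw [Complex.norm_def, Real.sqrt_eq_one, Complex.normSq_apply] at h
  rw [map_neg_eq_conj, ← Complex.normSq_eq_norm_sq, Complex.normSq_apply]
  simp only [Complex.sub_re, Complex.one_re, Complex.conj_re, Complex.sub_im, Complex.one_im,
    Complex.conj_im]
  nlinarith

/-- `2 - 2 Re ψ(g)` is the Laplacian eigenvalue of the Cayley graph of `G` with respect to `±g` at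
the character `ψ`, so `c` bounds its spectral gap from below. -/
theorem poincare_inequality (x : G → ℝ) (g : G) {c : ℝ}
    (hc : ∀ ψ : AddChar G ℂ, ψ ≠ 0 → c ≤ 2 - 2 * (ψ g).re) :
    c * (Fintype.card G * ∑ j, x j ^ 2 - (∑ j, x j) ^ 2) ≤
      Fintype.card G * ∑ j, (x j - x (j + g)) ^ 2 := by
  classical
  set F : AddChar G ℂ → ℂ := fun ψ => ∑ j, (x j : ℂ) * ψ j
  have hx : ∑ ψ, ‖F ψ‖ ^ 2 = Fintype.card G * ∑ j, x j ^ 2 := by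
    simp [F, sum_norm_sq_sum_mul_apply]
  have hdiff : ∑ ψ, (2 - 2 * (ψ g).re) * ‖F ψ‖ ^ 2 =
      Fintype.card G * ∑ j, (x j - x (j + g)) ^ 2 := by
    have := sum_norm_sq_sum_mul_apply fun j => ((x j - x (j + g) : ℝ) : ℂ)
    simp only [Complex.norm_real, Real.norm_eq_abs, sq_abs] at this
    simpa only [Complex.ofReal_sub, sum_sub_comp_add_mul_apply, norm_mul, mul_pow,
      norm_one_sub_apply_neg_sq] using this
  have hzero : ‖F 0‖ ^ 2 = (∑ j, x j) ^ 2 := by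
    simp [F, ← Complex.ofReal_sum, sq_abs]
  calc c * (Fintype.card G * ∑ j, x j ^ 2 - (∑ j, x j) ^ 2)
      = ∑ ψ ∈ univ.erase 0, c * ‖F ψ‖ ^ 2 := by
        rw [← mul_sum, ← hx, ← add_sum_erase _ _ (mem_univ 0), hzero]; ring
    _ ≤ ∑ ψ ∈ univ.erase 0, (2 - 2 * (ψ g).re) * ‖F ψ‖ ^ 2 :=
        sum_le_sum fun ψ hψ => by gcongr; exact hc ψ (ne_of_mem_erase hψ)
    _ = _ := by
        rw [← hdiff, ← add_sum_erase _ _ (mem_univ 0)]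
        simp

end FiniteAbelian

lemma apply_fin_eq_pow_val {n : ℕ} [NeZero n] (ψ : AddChar (Fin n) ℂ) (j : Fin n) :
    ψ j = ψ 1 ^ j.val := by
  obtain ⟨m, rfl⟩ := Nat.exists_eq_succ_of_ne_zero (NeZero.ne n)
  induction j using Fin.induction with
  | zero => simp
  | succ i ih =>
    rw [← Fin.coeSucc_eq_succ, map_add_eq_mul, ih, Fin.coeSucc_eq_succ, Fin.val_succ,
      Fin.val_castSucc, pow_succ]

lemma re_apply_one_le_cos {n : ℕ} [NeZero n] (ψ : AddChar (Fin n) ℂ) (hψ : ψ ≠ 0) :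
    (ψ 1).re ≤ cos (2 * π / n) := by
  have hpow : ψ 1 ^ n = 1 := by
    rw [← map_nsmul_eq_pow]
    simpa using congrArg ψ (card_nsmul_eq_zero (x := (1 : Fin n)))
  obtain ⟨k, hkn, hk⟩ := (Complex.isPrimitiveRoot_exp n (NeZero.ne n)).eq_pow_of_pow_eq_one hpow
  have hk0 : k ≠ 0 := by
    rintro rfl
    exact hψ (DFunLike.ext _ _ fun j => by
      rw [apply_fin_eq_pow_val, ← hk, pow_zero, one_pow, zero_apply])
  have hre : (ψ 1).re = cos (2 * π * k / n) := by
    rw [← hk, ← Complex.exp_nat_mul, ← Complex.exp_ofReal_mul_I_re]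
    push_cast
    ring_nf
  rw [hre]
  exact cos_two_pi_mul_div_le (Nat.pos_of_ne_zero hk0) hkn

end AddChar

theorem cycle_poincare_inequality {n : ℕ} [NeZero n] (x : Fin n → ℝ) :
    (2 - 2 * cos (2 * π / n)) * (n * ∑ j, x j ^ 2 - (∑ j, x j) ^ 2) ≤
      n * ∑ j, (x j - x (j + 1)) ^ 2 := by
  simpa using AddChar.poincare_inequality x 1 fun ψ hψ => by
    linarith [ψ.re_apply_one_le_cos hψ]

lemma of_perm_mul_mul_transpose {m R : Type*} [Fintype m] [DecidableEq m] [NonAssocSemiring R]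
    (σ : Equiv.Perm m) (M : Matrix m m R) :
    (of fun i j => if σ j = i then 1 else 0) * M * (of fun i j => if σ j = i then (1 : R) else 0)ᵀ =
      M.submatrix σ.symm σ.symm := by
  ext i j
  simp [Matrix.mul_apply, ← Equiv.eq_symm_apply]

lemma cycleAdj_transpose (n : ℕ) : (cycleAdj n)ᵀ = cycleAdj n := by
  ext i j
  simp only [transpose_apply, cycleAdj, of_apply, or_comm]

lemma cycleAdj_apply_self {n : ℕ} (i : Fin n) : cycleAdj n i i = 0 := by
  simp [cycleAdj]

lemma cycleAdj_nonneg {n : ℕ} (i j : Fin n) : 0 ≤ cycleAdj n i j := by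
  rw [cycleAdj, of_apply]; split_ifs <;> norm_num

lemma cycleAdj_le_one {n : ℕ} (i j : Fin n) : cycleAdj n i j ≤ 1 := by
  rw [cycleAdj, of_apply]; split_ifs <;> norm_num

lemma cycleAdj_apply {n : ℕ} [NeZero n] (hn : 2 ≤ n) (i j : Fin n) :
    cycleAdj n i j = if j = i + 1 ∨ i = j + 1 then 1 else 0 := by
  have hsub : ∀ a b : Fin n, (a.val + n - b.val) % n = 1 ↔ a = b + 1 := by
    intro a b
    rw [← sub_eq_iff_eq_add', Fin.ext_iff, Fin.sub_def, Fin.val_one', Nat.mod_eq_of_lt hn]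
    dsimp only
    rw [show n - b.val + a.val = a.val + n - b.val by omega]
  simp only [cycleAdj, of_apply, hsub]

lemma Fin.add_one_ne_sub_one {n : ℕ} [NeZero n] (hn : 3 ≤ n) (i : Fin n) : i + 1 ≠ i - 1 := by
  intro h
  have h2 : (1 : Fin n) + 1 = 0 := by
    rw [← sub_self (i - 1)]
    nth_rewrite 1 [← h]
    abel
  have h1 : (1 : Fin n).val = 1 := by rw [Fin.val_one', Nat.mod_eq_of_lt (by omega)]
  have := congrArg Fin.val h2
  rw [Fin.val_add, h1, Fin.val_zero, Nat.mod_eq_of_lt (by omega)] at this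
  omega

lemma cycleAdj_mulVec {n : ℕ} [NeZero n] (hn : 3 ≤ n) (x : Fin n → ℝ) :
    cycleAdj n *ᵥ x = fun i => x (i + 1) + x (i - 1) := by
  ext i
  have hmem : ∀ j, (j = i + 1 ∨ i = j + 1) ↔ j ∈ ({i + 1, i - 1} : Finset (Fin n)) := by
    simp [eq_sub_iff_add_eq, eq_comm]
  simp only [mulVec, dotProduct, cycleAdj_apply (by omega : 2 ≤ n), ite_mul, one_mul, zero_mul,
    hmem, sum_ite_mem, univ_inter, sum_pair (Fin.add_one_ne_sub_one hn i)]

lemma dotProduct_two_sub_cycleAdj_mulVec {n : ℕ} [NeZero n] (hn : 3 ≤ n) (x : Fin n → ℝ) :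
    x ⬝ᵥ (((2 : ℝ) • (1 : Matrix (Fin n) (Fin n) ℝ) - cycleAdj n) *ᵥ x) =
      ∑ i, (x i - x (i + 1)) ^ 2 := by
  have hprev : ∑ i, x i * x (i - 1) = ∑ i, x i * x (i + 1) :=
    Fintype.sum_equiv (Equiv.subRight 1) _ _ fun i => by simp [mul_comm]
  have hsq : ∑ i, x (i + 1) ^ 2 = ∑ i, x i ^ 2 :=
    Fintype.sum_equiv (Equiv.addRight 1) _ _ fun i => rfl
  have hcycle : x ⬝ᵥ (cycleAdj n *ᵥ x) = 2 * ∑ i, x i * x (i + 1) := by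
    rw [cycleAdj_mulVec hn, dotProduct]
    simp only [mul_add, sum_add_distrib, hprev]
    ring
  have hdiff : ∑ i, (x i - x (i + 1)) ^ 2 = 2 * ∑ i, x i ^ 2 - 2 * ∑ i, x i * x (i + 1) := by
    simp only [sub_sq, sum_add_distrib, sum_sub_distrib, hsq, mul_assoc, ← mul_sum]
    ring
  rw [sub_mulVec, dotProduct_sub, smul_mulVec, one_mulVec, dotProduct_smul, hcycle, hdiff,
    smul_eq_mul, dotProduct]
  simp only [sq]

theorem posSemidef_two_sub_cycleAdj_add_gap_smul {n : ℕ} [NeZero n] (hn : 3 ≤ n) :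
    PosSemidef ((2 : ℝ) • (1 : Matrix (Fin n) (Fin n) ℝ) - cycleAdj n +
      (2 - 2 * cos (2 * π / n)) • (of (fun _ _ => (1 : ℝ)) - 1)) := by
  set c := 2 - 2 * cos (2 * π / n)
  have hc : 0 ≤ c := by linarith [cos_le_one (2 * π / n)]
  refine PosSemidef.of_dotProduct_mulVec_nonneg ?_ fun x => ?_
  · have hJ : (of fun _ _ => (1 : ℝ) : Matrix (Fin n) (Fin n) ℝ)ᵀ = of fun _ _ => 1 := rfl
    simp [IsHermitian, conjTranspose_eq_transpose_of_trivial, cycleAdj_transpose, hJ]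
  · have hJ : x ⬝ᵥ (of (fun _ _ => (1 : ℝ)) *ᵥ x) = (∑ i, x i) ^ 2 := by
      simp [dotProduct, mulVec, sq, sum_mul]
    have hpoincare := cycle_poincare_inequality x
    rw [star_trivial, add_mulVec, dotProduct_add, dotProduct_two_sub_cycleAdj_mulVec hn,
      smul_mulVec, dotProduct_smul, sub_mulVec, dotProduct_sub, one_mulVec, hJ, smul_eq_mul]
    have hn1 : (1 : ℝ) ≤ n := by exact_mod_cast (by omega : 1 ≤ n)
    have hxx : x ⬝ᵥ x = ∑ i, x i ^ 2 := by simp [dotProduct, sq]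
    rw [hxx]
    -- `n` times the goal is at least `c (n - 1) (∑ xᵢ)²` by the Poincaré inequality
    nlinarith [mul_nonneg (mul_nonneg hc (sq_nonneg (∑ i, x i))) (sub_nonneg.2 hn1)]

theorem stmt19 (n : ℕ) (hn : 3 ≤ n) (σ : Equiv.Perm (Fin n))
    (P : Matrix (Fin n) (Fin n) ℝ)
    (hP : P = Matrix.of fun i j => if σ j = i then (1 : ℝ) else 0)
    (X : Matrix (Fin n) (Fin n) ℝ) (hX : X = P * cycleAdj n * Pᵀ)
    (J : Matrix (Fin n) (Fin n) ℝ) (hJ : J = Matrix.of fun _ _ => (1 : ℝ)) :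
    X.mulVec (fun _ => 1) = (fun _ => 2) ∧
    (∀ i, X i i = 0) ∧
    (∀ i j, 0 ≤ X i j ∧ X i j ≤ J i j) ∧
    Matrix.PosSemidef
      ((2 : ℝ) • (1 : Matrix (Fin n) (Fin n) ℝ) - X +
        (2 - 2 * Real.cos (2 * Real.pi / n)) • (J - 1)) := by
  have : NeZero n := ⟨by omega⟩
  subst hP hX hJ
  rw [of_perm_mul_mul_transpose]
  refine ⟨?_, fun i => cycleAdj_apply_self _,
    fun i j => ⟨cycleAdj_nonneg _ _, cycleAdj_le_one _ _⟩, ?_⟩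
  · ext i
    simp [submatrix_mulVec_equiv, cycleAdj_mulVec hn, one_add_one_eq_two]
  · convert (posSemidef_two_sub_cycleAdj_add_gap_smul hn).submatrix σ.symm using 1
    ext i j
    simp [one_apply]
end
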